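/- Dynamic regret bound for predictive online forward–backward splitting with constant step length. In the setting of the predictive online forward–backward method (spaces X_k, functions F_k, G_k with factors γ_{F_k}, γ_{G_k}, L_k, parameters ζ_k ∈ (0,1], γ_k defined case-wise with γ_k ≥ 0, predictors A_k, bounded comparison set 𝓑 with prediction bound with constants Λ_k and penalties ε_{k+1}), suppose the step lengths are constant, τ_k ≡ τ > 0, and that 1 + γ_k τ ≥ Λ_k for all k = 0,…,N−1. Let x^{1:N} be generated by z^{k+1} := A_k(x^k), x^{k+1} := prox_{τ G_{k+1}}(z^{k+1} − τ ∇F_{k+1}(z^{k+1})) from an initial x^0 ∈ X_0. Then dynregret_{𝓑_{1:N}}(x^{1:N}) + Σ_{k=0}^{N−1} ((1 − ζ_{k+1})/(2τ))·‖x^{k+1} − A_k(x^k)‖² ≤ sup over x̄^0 ∈ 𝓑_0 of (1 + γ_0 τ)·‖x^0 − x̄^0‖²/(2τ) + Σ_{k=1}^{N} ε_k/τ. -/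

import Mathlib

/-!
Each step rests on the three-point inequality for the proximal map of the `γ_G`-strongly convex
`G_{k+1}` at the forward step from `z = A_k(x^k)`, plus a first-order bound on `F_{k+1}`: strong
convexity at `x^{k+1}` and Young's inequality on the gradient mismatch when `γ_F > 0`, convexity
at `z` and the descent lemma (with `τL ≤ ζ`) when `γ_F = 0`. This bounds the scaled regret of the
step plus `(1 + γ_{k+1}τ)/2 ‖x^{k+1} - x̄^{k+1}‖²` by `½‖A_k(x^k) - x̄^{k+1}‖²`, which the
prediction bound and `Λ_k ≤ 1 + γ_kτ` turn into `(1 + γ_kτ)/2 ‖x^k - x̄^k‖² + ε_{k+1}`, so the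
distances telescope. A comparator with some `J_k(x̄^k) = ∞` has regret `-∞`.
-/

open scoped InnerProductSpace

/-- Convexity for extended-real-valued functions. -/
def EConvexOn {Z : Type*} [AddCommGroup Z] [Module ℝ Z] (f : Z → EReal) : Prop :=
  ∀ u v : Z, ∀ a b : ℝ, 0 ≤ a → 0 ≤ b → a + b = 1 →
    f (a • u + b • v) ≤ (a : EReal) * f u + (b : EReal) * f v

/-- `p = prox_{τG}(v)`, i.e. `p` minimises `w ↦ τ G(w) + ½‖w − v‖²`. -/
def IsProx {Z : Type*} [NormedAddCommGroup Z] [InnerProductSpace ℝ Z]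
    (G : Z → EReal) (τ : ℝ) (v p : Z) : Prop :=
  ∀ w : Z, (τ : EReal) * G p + ((1 / 2 * ‖p - v‖ ^ 2 : ℝ) : EReal) ≤
    (τ : EReal) * G w + ((1 / 2 * ‖w - v‖ ^ 2 : ℝ) : EReal)

open Set Filter Topology

lemma le_of_forall_one_sub_mul_le {a b : ℝ} (h : ∀ t ∈ Ioo (0 : ℝ) 1, (1 - t) * a ≤ b) :
    a ≤ b := by
  have hlim : Tendsto (fun t : ℝ => (1 - t) * a) (𝓝[>] 0) (𝓝 a) := by
    have : Continuous (fun t : ℝ => (1 - t) * a) := by fun_prop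
    simpa using (this.tendsto 0).mono_left nhdsWithin_le_nhds
  exact le_of_tendsto hlim (eventually_of_mem (Ioo_mem_nhdsGT one_pos) h)

lemma sum_coe_sub_le_of_telescoping {N : ℕ} {r s a e : ℕ → ℝ} {y : ℕ → EReal}
    (hy : ∀ k < N, y k ≠ ⊥)
    (hstep : ∀ k < N, ∀ w : ℝ, y k = w → r k - w + s k + a (k + 1) ≤ a k + e k)
    (ha : 0 ≤ a N) :
    ∑ k ∈ Finset.range N, ((r k : EReal) - y k)
      ≤ ((a 0 + ∑ k ∈ Finset.range N, e k - ∑ k ∈ Finset.range N, s k : ℝ) : EReal) := by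
  by_cases htop : ∃ k ∈ Finset.range N, y k = ⊤
  · obtain ⟨k, hk, hyk⟩ := htop
    rw [← Finset.add_sum_erase _ _ hk, hyk, EReal.sub_top, EReal.bot_add]
    exact bot_le
  push Not at htop
  have hyw : ∀ k ∈ Finset.range N, y k = (y k).toReal := fun k hk =>
    (EReal.coe_toReal (htop k hk) (hy k (Finset.mem_range.1 hk))).symm
  have hreal : ∑ k ∈ Finset.range N, (r k - (y k).toReal)
      ≤ a 0 + ∑ k ∈ Finset.range N, e k - ∑ k ∈ Finset.range N, s k := by
    have h : ∑ k ∈ Finset.range N, (r k - (y k).toReal + s k - e k)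
        ≤ ∑ k ∈ Finset.range N, (a k - a (k + 1)) :=
      Finset.sum_le_sum fun k hk => by
        linarith [hstep k (Finset.mem_range.1 hk) _ (hyw k hk)]
    rw [Finset.sum_range_sub'] at h
    simp only [Finset.sum_sub_distrib, Finset.sum_add_distrib] at h ⊢
    linarith
  calc ∑ k ∈ Finset.range N, ((r k : EReal) - y k)
      = ∑ k ∈ Finset.range N, ((r k - (y k).toReal : ℝ) : EReal) :=
        Finset.sum_congr rfl fun k hk => by rw [hyw k hk, ← EReal.coe_sub, EReal.toReal_coe]
    _ = ((∑ k ∈ Finset.range N, (r k - (y k).toReal) : ℝ) : EReal) :=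
        (map_sum (⟨⟨((↑) : ℝ → EReal), EReal.coe_zero⟩, EReal.coe_add⟩ : ℝ →+ EReal) _ _).symm
    _ ≤ _ := EReal.coe_le_coe hreal

lemma Finset.sum_Icc_one_eq_sum_range {M : Type*} [AddCommMonoid M] (f : ℕ → M) (N : ℕ) :
    ∑ k ∈ Finset.Icc 1 N, f k = ∑ k ∈ Finset.range N, f (k + 1) := by
  rw [Finset.range_eq_Ico, Finset.sum_Ico_add', zero_add, Finset.Ico_add_one_right_eq_Icc]

lemma EReal.iSup₂_add_coe_le {ι : Type*} {s : Set ι} {f g : ι → EReal} {c e : ℝ}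
    (h : ∀ i ∈ s, f i ≤ g i + ((e - c : ℝ) : EReal)) :
    (⨆ i ∈ s, f i) + (c : EReal) ≤ (⨆ i ∈ s, g i) + (e : EReal) :=
  calc (⨆ i ∈ s, f i) + (c : EReal) ≤ (⨆ i ∈ s, g i) + ((e - c : ℝ) : EReal) + (c : EReal) := by
        gcongr
        exact iSup₂_le fun i hi => (h i hi).trans (by gcongr; exact le_iSup₂_of_le i hi le_rfl)
    _ = (⨆ i ∈ s, g i) + (e : EReal) := by rw [add_assoc, ← coe_add, _root_.sub_add_cancel]

lemma ConvexOn.add_fderiv_le {F : Type*} [NormedAddCommGroup F] [NormedSpace ℝ F] {f : F → ℝ}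
    {f' : F →L[ℝ] ℝ} {p : F} (hf : ConvexOn ℝ univ f) (hf' : HasFDerivAt f f' p) (u : F) :
    f p + f' (u - p) ≤ f u := by
  have hline : HasDerivAt (fun s : ℝ => p + s • (u - p)) (u - p) 0 := by
    simpa using ((hasDerivAt_id (0 : ℝ)).smul_const (u - p)).const_add p
  have hderiv : HasDerivAt (fun s : ℝ => f (p + s • (u - p))) (f' (u - p)) 0 :=
    hf'.comp_hasDerivAt_of_eq 0 hline (by simp)
  have hconv : ConvexOn ℝ univ (fun s : ℝ => f (p + s • (u - p))) := by
    simpa [Function.comp_def, AffineMap.lineMap_apply, add_comm] using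
      hf.comp_affineMap (AffineMap.lineMap p u)
  have := hconv.le_slope_of_hasDerivAt (mem_univ 0) (mem_univ 1) one_pos hderiv
  rw [slope_def_field] at this
  simp only [one_smul, zero_smul, add_zero, add_sub_cancel, sub_zero, div_one] at this
  linarith

section InnerProductSpace

variable {E : Type*} [NormedAddCommGroup E] [InnerProductSpace ℝ E]

lemma norm_smul_add_smul_sub_sq {a b : ℝ} (hab : a + b = 1) (x y v : E) :
    ‖a • x + b • y - v‖ ^ 2 = a * ‖x - v‖ ^ 2 + b * ‖y - v‖ ^ 2 - a * b * ‖x - y‖ ^ 2 := by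
  obtain rfl := eq_sub_of_add_eq hab
  simp only [← real_inner_self_eq_norm_sq, inner_sub_left, inner_sub_right, inner_add_left,
    inner_add_right, real_inner_smul_left, real_inner_smul_right, real_inner_comm x y,
    real_inner_comm x v, real_inner_comm y v]
  ring

lemma EConvexOn.exists_eq_coe_le {G : E → EReal} {m : ℝ}
    (hG : EConvexOn fun w => G w - ((m / 2 * ‖w‖ ^ 2 : ℝ) : EReal)) (hbot : ∀ w, G w ≠ ⊥)
    {x y : E} {Gx Gy : ℝ} (hx : G x = Gx) (hy : G y = Gy)
    {a b : ℝ} (ha : 0 ≤ a) (hb : 0 ≤ b) (hab : a + b = 1) :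
    ∃ g : ℝ, G (a • x + b • y) = g ∧ g ≤ a * Gx + b * Gy - m / 2 * a * b * ‖x - y‖ ^ 2 := by
  set w := a • x + b • y
  have h := hG x y a b ha hb hab
  simp only [hx, hy] at h
  have hle : G w ≤ ((a * (Gx - m / 2 * ‖x‖ ^ 2) + b * (Gy - m / 2 * ‖y‖ ^ 2)
      + m / 2 * ‖w‖ ^ 2 : ℝ) : EReal) := by
    rw [EReal.coe_add]
    refine (EReal.sub_le_iff_le_add (.inl (EReal.coe_ne_bot _)) (.inl (EReal.coe_ne_top _))).1
      (h.trans_eq ?_)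
    norm_cast
  have hw : G w = (G w).toReal :=
    (EReal.coe_toReal (hle.trans_lt (EReal.coe_lt_top _)).ne (hbot w)).symm
  refine ⟨_, hw, ?_⟩
  have hle' := EReal.coe_le_coe_iff.1 (hw ▸ hle)
  have hid := norm_smul_add_smul_sub_sq hab x y 0
  simp only [sub_zero] at hid
  linear_combination hle' + m / 2 * hid

lemma IsProx.ne_top {G : E → EReal} {σ : ℝ} {v p : E} (hp : IsProx G σ v p) (hσ : 0 < σ)
    (hG : ∃ w, G w ≠ ⊤) : G p ≠ ⊤ := by
  obtain ⟨w, hw⟩ := hG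
  intro htop
  have h := hp w
  rw [htop, EReal.coe_mul_top_of_pos hσ, EReal.top_add_coe, top_le_iff] at h
  refine (EReal.add_lt_top ?_ (EReal.coe_ne_top _)).ne h
  generalize G w = y at hw ⊢
  induction y using EReal.rec <;> simp_all [EReal.coe_mul_bot_of_pos hσ, ← EReal.coe_mul]

lemma IsProx.add_sq_le {G : E → EReal} {σ m : ℝ} (hσ : 0 ≤ σ)
    (hG : EConvexOn fun w => G w - ((m / 2 * ‖w‖ ^ 2 : ℝ) : EReal)) (hbot : ∀ w, G w ≠ ⊥)
    {v p u : E} (hp : IsProx G σ v p) {Gp Gu : ℝ} (hGp : G p = Gp) (hGu : G u = Gu) :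
    σ * Gp + 1 / 2 * ‖p - v‖ ^ 2 + (1 + σ * m) / 2 * ‖u - p‖ ^ 2
      ≤ σ * Gu + 1 / 2 * ‖u - v‖ ^ 2 := by
  -- `p` minimises the `(1 + σ m)`-strongly convex `σ G + ½‖· - v‖²`: compare it with the points
  -- of the segment `[p, u]` and let them tend to `p`.
  suffices ∀ t ∈ Ioo (0 : ℝ) 1, (1 - t) * ((1 + σ * m) / 2 * ‖u - p‖ ^ 2)
      ≤ σ * Gu + 1 / 2 * ‖u - v‖ ^ 2 - (σ * Gp + 1 / 2 * ‖p - v‖ ^ 2) by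
    linarith [le_of_forall_one_sub_mul_le this]
  rintro t ⟨ht0, ht1⟩
  obtain ⟨g, hg, hgle⟩ := hG.exists_eq_coe_le hbot hGp hGu (sub_nonneg.2 ht1.le) ht0.le
    (sub_add_cancel 1 t)
  have hmin := hp ((1 - t) • p + t • u)
  rw [hGp, hg] at hmin
  have hmin' : σ * Gp + 1 / 2 * ‖p - v‖ ^ 2 ≤ σ * g + 1 / 2 * ‖(1 - t) • p + t • u - v‖ ^ 2 := by
    exact_mod_cast hmin
  have hid := norm_smul_add_smul_sub_sq (sub_add_cancel 1 t) p u v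
  rw [norm_sub_rev p u] at hgle hid
  refine le_of_mul_le_mul_left ?_ ht0
  nlinarith [mul_le_mul_of_nonneg_left hgle hσ]

lemma IsProx.forwardStep_le {G : E → EReal} {τ m : ℝ} (hτ : 0 ≤ τ)
    (hG : EConvexOn fun w => G w - ((m / 2 * ‖w‖ ^ 2 : ℝ) : EReal)) (hbot : ∀ w, G w ≠ ⊥)
    {g z p u : E} (hp : IsProx G τ (z - τ • g) p) {Gp Gu : ℝ} (hGp : G p = Gp) (hGu : G u = Gu) :
    τ * Gp + τ * ⟪g, p - z⟫_ℝ + 1 / 2 * ‖p - z‖ ^ 2 + (1 + τ * m) / 2 * ‖u - p‖ ^ 2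
      ≤ τ * Gu + τ * ⟪g, u - z⟫_ℝ + 1 / 2 * ‖u - z‖ ^ 2 := by
  have hexp : ∀ w : E,
      ‖w - (z - τ • g)‖ ^ 2 = ‖w - z‖ ^ 2 + 2 * τ * ⟪g, w - z⟫_ℝ + τ ^ 2 * ‖g‖ ^ 2 := by
    intro w
    rw [show w - (z - τ • g) = (w - z) + τ • g by abel, norm_add_sq_real, norm_smul,
      real_inner_smul_right, real_inner_comm, Real.norm_eq_abs, mul_pow, sq_abs]
    ring
  have h := hp.add_sq_le hτ hG hbot hGp hGu
  rw [hexp, hexp] at h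
  linarith

variable [CompleteSpace E]

lemma StrongConvexOn.add_inner_add_sq_le {f : E → ℝ} {g p : E} {m : ℝ}
    (hf : StrongConvexOn univ m f) (hg : HasGradientAt f g p) (u : E) :
    f p + ⟪g, u - p⟫_ℝ + m / 2 * ‖u - p‖ ^ 2 ≤ f u := by
  have h := (strongConvexOn_iff_convex.1 hf).add_fderiv_le
    (hg.hasFDerivAt.sub ((hasStrictFDerivAt_norm_sq p).hasFDerivAt.const_mul (m / 2))) u
  simp only [sub_apply, InnerProductSpace.toDual_apply_apply,
    smul_apply, coe_innerSL_apply, nsmul_eq_mul, Nat.cast_ofNat, smul_eq_mul] at h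
  have hsq : ‖u - p‖ ^ 2 = ‖u‖ ^ 2 - 2 * ⟪p, u - p⟫_ℝ - ‖p‖ ^ 2 := by
    rw [norm_sub_sq_real, inner_sub_right, real_inner_self_eq_norm_sq, real_inner_comm]
    ring
  linear_combination h + m / 2 * hsq

lemma le_add_inner_add_sq_of_lipschitz {f : E → ℝ} {g : E → E} {L : ℝ}
    (hg : ∀ w, HasGradientAt f (g w) w) (hL : ∀ w w', ‖g w - g w'‖ ≤ L * ‖w - w'‖) (z p : E) :
    f p ≤ f z + ⟪g z, p - z⟫_ℝ + L / 2 * ‖p - z‖ ^ 2 := by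
  set d := p - z
  set φ : ℝ → ℝ := fun t => f (z + t • d) - t * ⟪g z, d⟫_ℝ - L / 2 * t ^ 2 * ‖d‖ ^ 2
  have hφ : ∀ t, HasDerivAt φ (⟪g (z + t • d) - g z, d⟫_ℝ - L * t * ‖d‖ ^ 2) t := by
    intro t
    have hline : HasDerivAt (fun s : ℝ => z + s • d) d t := by
      simpa using ((hasDerivAt_id t).smul_const d).const_add z
    have h1 := ((hg (z + t • d)).hasFDerivAt.comp_hasDerivAt t hline)
    have h2 := ((hasDerivAt_id t).mul_const ⟪g z, d⟫_ℝ)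
    have h3 := (((hasDerivAt_pow 2 t).const_mul (L / 2)).mul_const (‖d‖ ^ 2))
    refine ((h1.sub h2).sub h3).congr_deriv ?_
    simp only [InnerProductSpace.toDual_apply_apply, inner_sub_left]
    ring
  obtain ⟨c, hc, hcφ⟩ := exists_hasDerivAt_eq_slope φ _ one_pos
    (fun t _ => (hφ t).continuousAt.continuousWithinAt) (fun t _ => hφ t)
  have hneg : ⟪g (z + c • d) - g z, d⟫_ℝ - L * c * ‖d‖ ^ 2 ≤ 0 := by
    have := (real_inner_le_norm _ _).trans
      (mul_le_mul_of_nonneg_right (hL (z + c • d) z) (norm_nonneg d))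
    rw [add_sub_cancel_left, norm_smul, Real.norm_of_nonneg hc.1.le] at this
    linarith
  have : φ 1 ≤ φ 0 := by rw [hcφ] at hneg; simpa [sub_nonpos] using hneg
  simp only [φ, d, one_smul, zero_smul, add_zero, add_sub_cancel] at this
  linarith

variable {F : E → ℝ} {G : E → EReal} {τ ζ L γF γG : ℝ} {z p u : E} {Gp Gu : ℝ}

lemma forwardBackward_step_of_strongConvexOn {F' : E → E} (hτ : 0 ≤ τ) (hζ : 0 < ζ)
    (hF : StrongConvexOn univ γF F) (hFp : HasGradientAt F (F' p) p)
    (hL : ‖F' z - F' p‖ ≤ L * ‖z - p‖)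
    (hG : EConvexOn fun w => G w - ((γG / 2 * ‖w‖ ^ 2 : ℝ) : EReal)) (hbot : ∀ w, G w ≠ ⊥)
    (hp : IsProx G τ (z - τ • F' z) p) (hGp : G p = Gp) (hGu : G u = Gu) :
    τ * (F p + Gp) + (1 - ζ) / 2 * ‖p - z‖ ^ 2
        + (1 + (γG + γF - τ * ζ⁻¹ * L ^ 2) * τ) / 2 * ‖u - p‖ ^ 2
      ≤ τ * (F u + Gu) + 1 / 2 * ‖u - z‖ ^ 2 := by
  have hprox := hp.forwardStep_le hτ hG hbot hGp hGu
  have hconv := hF.add_inner_add_sq_le hFp u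
  have hcross : τ * ⟪F' z - F' p, u - p⟫_ℝ
      ≤ ζ / 2 * ‖p - z‖ ^ 2 + τ ^ 2 * ζ⁻¹ * L ^ 2 / 2 * ‖u - p‖ ^ 2 := by
    have hcs : ⟪F' z - F' p, u - p⟫_ℝ ≤ L * ‖p - z‖ * ‖u - p‖ := by
      rw [norm_sub_rev p z]
      exact (real_inner_le_norm _ _).trans (mul_le_mul_of_nonneg_right hL (norm_nonneg _))
    -- Young's inequality, from `(ζ a - τ L b)² ≥ 0`
    have hyoung : τ * (L * ‖p - z‖ * ‖u - p‖)
        ≤ ζ / 2 * ‖p - z‖ ^ 2 + τ ^ 2 * ζ⁻¹ * L ^ 2 / 2 * ‖u - p‖ ^ 2 := by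
      have := div_nonneg (sq_nonneg (ζ * ‖p - z‖ - τ * L * ‖u - p‖)) (mul_nonneg zero_le_two hζ.le)
      field_simp at this ⊢
      nlinarith [this]
    nlinarith [mul_le_mul_of_nonneg_left hcs hτ]
  simp only [inner_sub_left, inner_sub_right] at hprox hconv hcross
  nlinarith [mul_le_mul_of_nonneg_left hconv hτ]

lemma forwardBackward_step_of_convexOn {F' : E → E} (hτ : 0 ≤ τ) (hτL : τ * L ≤ ζ)
    (hF : ConvexOn ℝ univ F) (hF' : ∀ w, HasGradientAt F (F' w) w)
    (hL : ∀ w w', ‖F' w - F' w'‖ ≤ L * ‖w - w'‖)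
    (hG : EConvexOn fun w => G w - ((γG / 2 * ‖w‖ ^ 2 : ℝ) : EReal)) (hbot : ∀ w, G w ≠ ⊥)
    (hp : IsProx G τ (z - τ • F' z) p) (hGp : G p = Gp) (hGu : G u = Gu) :
    τ * (F p + Gp) + (1 - ζ) / 2 * ‖p - z‖ ^ 2 + (1 + γG * τ) / 2 * ‖u - p‖ ^ 2
      ≤ τ * (F u + Gu) + 1 / 2 * ‖u - z‖ ^ 2 := by
  have hprox := hp.forwardStep_le hτ hG hbot hGp hGu
  have hconv := hF.add_fderiv_le (hF' z).hasFDerivAt u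
  rw [InnerProductSpace.toDual_apply_apply] at hconv
  have hdesc := le_add_inner_add_sq_of_lipschitz hF' hL z p
  nlinarith [mul_le_mul_of_nonneg_left hconv hτ, mul_le_mul_of_nonneg_left hdesc hτ,
    mul_le_mul_of_nonneg_right hτL (sq_nonneg ‖p - z‖)]

lemma forwardBackward_step {F' : E → E} {γ : ℝ} (hτ : 0 ≤ τ) (hζ : 0 < ζ) (hγF : 0 ≤ γF)
    (hFconv : ConvexOn ℝ univ F) (hF' : ∀ w, HasGradientAt F (F' w) w)
    (hL : ∀ w w', ‖F' w - F' w'‖ ≤ L * ‖w - w'‖)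
    (hFsc : ConvexOn ℝ univ fun w => F w - γF / 2 * ‖w‖ ^ 2)
    (hG : EConvexOn fun w => G w - ((γG / 2 * ‖w‖ ^ 2 : ℝ) : EReal)) (hbot : ∀ w, G w ≠ ⊥)
    (hγ : γ = if 0 < γF then γG + γF - τ * ζ⁻¹ * L ^ 2 else γG) (hγcase : γF = 0 → τ * L ≤ ζ)
    (hp : IsProx G τ (z - τ • F' z) p) (hGp : G p = Gp) (hGu : G u = Gu) :
    τ * (F p + Gp) + (1 - ζ) / 2 * ‖p - z‖ ^ 2 + (1 + γ * τ) / 2 * ‖u - p‖ ^ 2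
      ≤ τ * (F u + Gu) + 1 / 2 * ‖u - z‖ ^ 2 := by
  split_ifs at hγ with hγF_pos <;> subst hγ
  · exact forwardBackward_step_of_strongConvexOn hτ hζ (strongConvexOn_iff_convex.2 hFsc)
      (hF' p) (hL z p) hG hbot hp hGp hGu
  · exact forwardBackward_step_of_convexOn hτ (hγcase (le_antisymm (not_lt.1 hγF_pos) hγF))
      hFconv hF' hL hG hbot hp hGp hGu

end InnerProductSpace

theorem pofb_dynamic_regret_general
    {X : ℕ → Type*}
    [∀ k, NormedAddCommGroup (X k)] [∀ k, InnerProductSpace ℝ (X k)]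
    [∀ k, CompleteSpace (X k)]
    (F : ∀ k, X k → ℝ) (F' : ∀ k, X k → X k) (G : ∀ k, X k → EReal)
    (L γF γG γ ζ Λ ε : ℕ → ℝ) (τ : ℝ)
    (hτ : 0 < τ) (hζ : ∀ k, 0 < ζ k ∧ ζ k ≤ 1)
    (hγF : ∀ k, 0 ≤ γF k)
    (hFconv : ∀ k, 1 ≤ k → ConvexOn ℝ Set.univ (F k))
    (hFgrad : ∀ k, 1 ≤ k → ∀ w, HasGradientAt (F k) (F' k w) w)
    (hFlip : ∀ k, 1 ≤ k → ∀ w w', ‖F' k w - F' k w'‖ ≤ L k * ‖w - w'‖)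
    (hFsc : ∀ k, 1 ≤ k → ConvexOn ℝ Set.univ (fun w => F k w - γF k / 2 * ‖w‖ ^ 2))
    (hGproper : ∀ k, 1 ≤ k → (∀ w, G k w ≠ ⊥) ∧ ∃ w, G k w ≠ ⊤)
    (hGsc : ∀ k, 1 ≤ k →
      EConvexOn (fun w => G k w - ((γG k / 2 * ‖w‖ ^ 2 : ℝ) : EReal)))
    (hγdef : ∀ k, 1 ≤ k →
      γ k = if 0 < γF k then γG k + γF k - τ * (ζ k)⁻¹ * L k ^ 2 else γG k)
    (hγcase : ∀ k, 1 ≤ k → γF k = 0 → τ * L k ≤ ζ k)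
    (hγpos : ∀ k, 0 ≤ γ k)
    (A : ∀ k, X k → X (k + 1))
    (𝓑 : Set (∀ k, X k))
    (x : ∀ k, X k)
    (hstep : ∀ k : ℕ, IsProx (G (k + 1)) τ
      (A k (x k) - τ • F' (k + 1) (A k (x k))) (x (k + 1)))
    (hpred : ∀ b ∈ 𝓑, ∀ k : ℕ,
      1 / 2 * ‖A k (x k) - b (k + 1)‖ ^ 2 ≤ Λ k / 2 * ‖x k - b k‖ ^ 2 + ε (k + 1))
    (N : ℕ)
    (hΛstep : ∀ k < N, 1 + γ k * τ ≥ Λ k) :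
    (⨆ b ∈ 𝓑, ∑ k ∈ Finset.Icc 1 N,
        ((((F k (x k) : ℝ) : EReal) + G k (x k)) -
          (((F k (b k) : ℝ) : EReal) + G k (b k))))
      + ((∑ k ∈ Finset.range N,
          (1 - ζ (k + 1)) / (2 * τ) * ‖x (k + 1) - A k (x k)‖ ^ 2 : ℝ) : EReal)
    ≤ (⨆ b ∈ 𝓑, (((1 + γ 0 * τ) * ‖x 0 - b 0‖ ^ 2 / (2 * τ) : ℝ) : EReal))
      + ((∑ k ∈ Finset.Icc 1 N, ε k / τ : ℝ) : EReal) := by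
  have hGx : ∀ k, ∃ g : ℝ, G (k + 1) (x (k + 1)) = g := fun k =>
    ⟨_, (EReal.coe_toReal ((hstep k).ne_top hτ (hGproper _ k.succ_pos).2)
      ((hGproper _ k.succ_pos).1 _)).symm⟩
  choose Gx hGx using hGx
  rw [Finset.sum_Icc_one_eq_sum_range (fun k => ε k / τ)]
  refine EReal.iSup₂_add_coe_le fun b hb => ?_
  rw [Finset.sum_Icc_one_eq_sum_range, ← EReal.coe_add, add_sub_assoc']
  simp only [hGx, ← EReal.coe_add]
  refine sum_coe_sub_le_of_telescoping (a := fun k => (1 + γ k * τ) * ‖x k - b k‖ ^ 2 / (2 * τ))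
    (fun k _ => EReal.add_ne_bot_iff.2 ⟨EReal.coe_ne_bot _, (hGproper _ k.succ_pos).1 _⟩)
    (fun k hk w hw => ?_) (div_nonneg (mul_nonneg (by nlinarith [hγpos N]) (sq_nonneg _))
      (by positivity))
  have hGb : G (k + 1) (b (k + 1)) = ((w - F (k + 1) (b (k + 1)) : ℝ) : EReal) := by
    rw [EReal.coe_sub, ← hw, EReal.add_sub_cancel_left]
  have hfb := forwardBackward_step hτ.le (hζ _).1 (hγF _) (hFconv _ k.succ_pos)
    (hFgrad _ k.succ_pos) (hFlip _ k.succ_pos) (hFsc _ k.succ_pos) (hGsc _ k.succ_pos)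
    (hGproper _ k.succ_pos).1 (hγdef _ k.succ_pos) (hγcase _ k.succ_pos) (hstep k) (hGx k) hGb
  have hΛ := mul_le_mul_of_nonneg_right (hΛstep k hk) (sq_nonneg ‖x k - b k‖)
  rw [norm_sub_rev (b (k + 1)) (A k (x k)), norm_sub_rev (b (k + 1))] at hfb
  rw [← mul_le_mul_iff_of_pos_left hτ]
  field_simp
  nlinarith [hpred b hb k]

/-- **Dynamic regret bound for predictive online forward–backward splitting
with constant step length** (Corollary 2.6). -/
theorem pofb_dynamic_regret
    {X : ℕ → Type*}
    [∀ k, NormedAddCommGroup (X k)] [∀ k, InnerProductSpace ℝ (X k)]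
    [∀ k, CompleteSpace (X k)]
    (F : ∀ k, X k → ℝ) (F' : ∀ k, X k → X k) (G : ∀ k, X k → EReal)
    (L γF γG γ ζ Λ ε : ℕ → ℝ) (τ : ℝ)
    (hτ : 0 < τ) (hζ : ∀ k, 0 < ζ k ∧ ζ k ≤ 1)
    (hγF : ∀ k, 0 ≤ γF k) (hγG : ∀ k, 0 ≤ γG k) (hL : ∀ k, 0 ≤ L k)
    (hFconv : ∀ k, 1 ≤ k → ConvexOn ℝ Set.univ (F k))
    (hFgrad : ∀ k, 1 ≤ k → ∀ w, HasGradientAt (F k) (F' k w) w)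
    (hFlip : ∀ k, 1 ≤ k → ∀ w w', ‖F' k w - F' k w'‖ ≤ L k * ‖w - w'‖)
    (hFsc : ∀ k, 1 ≤ k → ConvexOn ℝ Set.univ (fun w => F k w - γF k / 2 * ‖w‖ ^ 2))
    (hGconv : ∀ k, 1 ≤ k → EConvexOn (G k))
    (hGproper : ∀ k, 1 ≤ k → (∀ w, G k w ≠ ⊥) ∧ ∃ w, G k w ≠ ⊤)
    (hGlsc : ∀ k, 1 ≤ k → LowerSemicontinuous (G k))
    (hGsc : ∀ k, 1 ≤ k →
      EConvexOn (fun w => G k w - ((γG k / 2 * ‖w‖ ^ 2 : ℝ) : EReal)))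
    (hγdef : ∀ k, 1 ≤ k →
      γ k = if 0 < γF k then γG k + γF k - τ * (ζ k)⁻¹ * L k ^ 2 else γG k)
    (hγcase : ∀ k, 1 ≤ k → γF k = 0 → τ * L k ≤ ζ k)
    (hγpos : ∀ k, 0 ≤ γ k)
    (hΛ : ∀ k, 0 < Λ k)
    (A : ∀ k, X k → X (k + 1))
    (𝓑 : Set (∀ k, X k))
    (h𝓑bdd : ∀ k, Bornology.IsBounded ((fun b => b k) '' 𝓑))
    (x : ∀ k, X k)
    (hstep : ∀ k : ℕ, IsProx (G (k + 1)) τ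
      (A k (x k) - τ • F' (k + 1) (A k (x k))) (x (k + 1)))
    (hpred : ∀ b ∈ 𝓑, ∀ k : ℕ,
      1 / 2 * ‖A k (x k) - b (k + 1)‖ ^ 2 ≤ Λ k / 2 * ‖x k - b k‖ ^ 2 + ε (k + 1))
    (N : ℕ)
    (hΛstep : ∀ k < N, 1 + γ k * τ ≥ Λ k) :
    (⨆ b ∈ 𝓑, ∑ k ∈ Finset.Icc 1 N,
        ((((F k (x k) : ℝ) : EReal) + G k (x k)) -
          (((F k (b k) : ℝ) : EReal) + G k (b k))))
      + ((∑ k ∈ Finset.range N,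
          (1 - ζ (k + 1)) / (2 * τ) * ‖x (k + 1) - A k (x k)‖ ^ 2 : ℝ) : EReal)
    ≤ (⨆ b ∈ 𝓑, (((1 + γ 0 * τ) * ‖x 0 - b 0‖ ^ 2 / (2 * τ) : ℝ) : EReal))
      + ((∑ k ∈ Finset.Icc 1 N, ε k / τ : ℝ) : EReal) :=
  pofb_dynamic_regret_general F F' G L γF γG γ ζ Λ ε τ hτ hζ hγF hFconv hFgrad hFlip hFsc hGproper
    hGsc hγdef hγcase hγpos A 𝓑 x hstep hpred N hΛstep
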